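/- Let A₀ = e₃ ⊗ (e₁ + i e₂)ᵀ ∈ gl(3,ℂ) and let Orb(A₀) = {e^{iφ} R₁ A₀ R₂⁻¹ : φ ∈ ℝ, R₁, R₂ ∈ SO(3)} be its orbit under the action (e^{iφ}, R₁, R₂) · A = e^{iφ} R₁ A R₂⁻¹ of U(1) × SO(3) × SO(3). Let ℤ₂ = {±1} act on SO(3) × S² by (−1)·(A, x) = (A J̃₋, −x), where J̃₋ = diag(−1,−1,1). Then the map sending the ℤ₂-orbit of (A, x) to the matrix x ⊗ (A₁ + i A₂)ᵀ, where A₁, A₂ denote the first and second columns of A, is a well-defined bijection from (SO(3) × S²)/ℤ₂ onto Orb(A₀). -/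

import Mathlib

open Matrix

noncomputable section

abbrev M3R : Type := Matrix (Fin 3) (Fin 3) ℝ
abbrev M3C : Type := Matrix (Fin 3) (Fin 3) ℂ

def isSO3 (R : M3R) : Prop := R * Rᵀ = 1 ∧ R.det = 1

def toC (R : M3R) : M3C := R.map (fun x => (x : ℂ))

/-- `J̃₋ = diag(-1,-1,1)`. -/
def Jtm : M3R := !![-1, 0, 0; 0, -1, 0; 0, 0, 1]

/-- `A₀ = e₃ ⊗ (e₁ + i e₂)ᵀ`. -/
def A0 : M3C := !![0, 0, 0; 0, 0, 0; 1, Complex.I, 0]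

/-- The orbit of `A₀` under the `U(1) × SO(3) × SO(3)` action
`(e^{iφ}, R₁, R₂) · A = e^{iφ} R₁ A R₂⁻¹`. -/
def OrbA0 : Set M3C :=
  {A | ∃ (φ : ℝ) (R₁ R₂ : M3R), isSO3 R₁ ∧ isSO3 R₂ ∧
    A = Complex.exp (φ * Complex.I) • (toC R₁ * A0 * (toC R₂)⁻¹)}

/-- `SO(3) × S²`, as a subtype of `M3R × (Fin 3 → ℝ)`. -/
abbrev SOS : Type := {p : M3R × (Fin 3 → ℝ) // isSO3 p.1 ∧ p.2 ⬝ᵥ p.2 = 1}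

/-- The `ℤ₂ = {±1}`-orbit relation on `SO(3) × S²`, where `(-1)·(A, x) = (A J̃₋, -x)`. -/
def z2Rel (p p' : SOS) : Prop :=
  p'.val = p.val ∨ p'.val = (p.val.1 * Jtm, -p.val.2)

/-!
Write `v(A) = A₁ + i A₂`. If `R ∈ SO(3)` has third column `x`, then `R A₀ Aᵀ = x ⊗ v(A)ᵀ`, so the
map lands in the orbit; conversely `e^{iφ} R₁ A₀ R₂ᵀ = (R₁ e₃) ⊗ (e^{iφ} v(R₂))ᵀ`, and the phase
is absorbed by a rotation about `e₃`: `e^{iφ} v(R₂) = v(R₂ · rotZ φ)`. For injectivity, a rank-one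
matrix `x ⊗ vᵀ` with `x` a real unit vector determines the pair `(x, v)` up to a common factor `c`
with `c² = 1`, and an element of `SO(3)` is determined by its first two columns, the third being
their cross product; `c = -1` is exactly the `ℤ₂`-action.
-/

theorem Matrix.exists_eq_smul_of_vecMulVec_eq {K m n : Type*} [Field K] [Fintype m]
    {x x' : m → K} {v v' : n → K} (hx : x ⬝ᵥ x = 1) (hx' : x' ⬝ᵥ x' = 1) (hv : v ≠ 0)
    (h : vecMulVec x v = vecMulVec x' v') : ∃ c : K, c * c = 1 ∧ x' = c • x ∧ v' = c • v := by
  have contract : ∀ {y y' : m → K} {w w' : n → K}, y ⬝ᵥ y = 1 →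
      vecMulVec y w = vecMulVec y' w' → w = (y ⬝ᵥ y') • w' := by
    intro y y' w w' hy hyw
    funext j
    have hj := congrArg (fun M => ∑ i, y i * M i j) hyw
    simp only [vecMulVec_apply, ← mul_assoc, ← Finset.sum_mul] at hj
    change (y ⬝ᵥ y) * w j = (y ⬝ᵥ y') * w' j at hj
    rwa [hy, one_mul] at hj
  set c := x ⬝ᵥ x'
  have hv' : v' = c • v := by rw [contract hx' h.symm, dotProduct_comm]
  have hc : c * c = 1 := by
    refine smul_left_injective K hv ?_
    simp only [mul_smul, ← hv', one_smul]
    exact (contract hx h).symm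
  refine ⟨c, hc, ?_, hv'⟩
  obtain ⟨j, hj⟩ := Function.ne_iff.1 hv
  have hx_eq : x = c • x' := by
    funext i
    have hij := congrFun (congrFun h i) j
    rw [hv'] at hij
    simp only [vecMulVec_apply, Pi.smul_apply, smul_eq_mul] at hij ⊢
    exact mul_right_cancel₀ hj (by rw [hij]; ring)
  rw [hx_eq, smul_smul, hc, one_smul]

lemma isSO3.transpose_mul_self {R : M3R} (h : isSO3 R) : Rᵀ * R = 1 :=
  mul_eq_one_comm.mp h.1

lemma isSO3.mul {R S : M3R} (hR : isSO3 R) (hS : isSO3 S) : isSO3 (R * S) := by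
  constructor
  · rw [transpose_mul, mul_assoc, ← mul_assoc S, hS.1, one_mul, hR.1]
  · rw [det_mul, hR.2, hS.2, one_mul]

lemma isSO3_Jtm : isSO3 Jtm := by
  constructor
  · ext i j; fin_cases i <;> fin_cases j <;> simp [Jtm, mul_apply, Fin.sum_univ_three]
  · simp [Jtm, det_fin_three]

lemma isSO3.col_dotProduct_col {R : M3R} (h : isSO3 R) (j : Fin 3) :
    (fun i => R i j) ⬝ᵥ (fun i => R i j) = 1 := by
  simpa [mul_apply, dotProduct] using congrFun (congrFun h.transpose_mul_self j) j

lemma isSO3.transpose_eq_adjugate {R : M3R} (h : isSO3 R) : Rᵀ = adjugate R := by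
  rw [← inv_eq_right_inv h.1, inv_def, h.2, Ring.inverse_one, one_smul]

lemma isSO3.col_two_eq_cross {R : M3R} (h : isSO3 R) :
    (fun i => R i 2) = (fun i => R i 0) ⨯₃ (fun i => R i 1) := by
  funext i
  have := congrFun (congrFun h.transpose_eq_adjugate 2) i
  fin_cases i <;> simp_all [adjugate_fin_three, cross_apply] <;> ring

lemma isSO3.ext_of_col {R S : M3R} (hR : isSO3 R) (hS : isSO3 S)
    (h0 : ∀ i, R i 0 = S i 0) (h1 : ∀ i, R i 1 = S i 1) : R = S := by
  have h2 := hR.col_two_eq_cross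
  rw [funext h0, funext h1, ← hS.col_two_eq_cross] at h2
  ext i j
  fin_cases j
  exacts [h0 i, h1 i, congrFun h2 i]

open Complex

/-- `A₁ + i A₂`. -/
def complexCol (A : M3R) : Fin 3 → ℂ := fun q => A q 0 + I * A q 1

lemma complexCol_mul_Jtm (A : M3R) : complexCol (A * Jtm) = -complexCol A := by
  funext q
  simp [complexCol, Jtm, mul_apply, Fin.sum_univ_three]
  ring

lemma complexCol_re (A : M3R) (q : Fin 3) : (complexCol A q).re = A q 0 := by
  simp [complexCol]

lemma complexCol_im (A : M3R) (q : Fin 3) : (complexCol A q).im = A q 1 := by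
  simp [complexCol]

lemma isSO3.complexCol_ne_zero {A : M3R} (hA : isSO3 A) : complexCol A ≠ 0 := by
  intro h
  have := hA.col_dotProduct_col 0
  simp [dotProduct, ← complexCol_re, h] at this

lemma isSO3.eq_of_complexCol_eq {A B : M3R} (hA : isSO3 A) (hB : isSO3 B)
    (h : complexCol A = complexCol B) : A = B :=
  hA.ext_of_col hB (fun q => by rw [← complexCol_re A, h, complexCol_re])
    (fun q => by rw [← complexCol_im A, h, complexCol_im])

def rotZ (φ : ℝ) : M3R := !![Real.cos φ, Real.sin φ, 0; -Real.sin φ, Real.cos φ, 0; 0, 0, 1]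

lemma isSO3_rotZ (φ : ℝ) : isSO3 (rotZ φ) := by
  have := Real.sin_sq_add_cos_sq φ
  constructor
  · ext i j
    fin_cases i <;> fin_cases j <;> simp [rotZ, mul_apply, Fin.sum_univ_three] <;>
      first | ring1 | linear_combination this
  · simp [rotZ, det_fin_three]
    linear_combination this

lemma complexCol_mul_rotZ (A : M3R) (φ : ℝ) :
    complexCol (A * rotZ φ) = exp (φ * I) • complexCol A := by
  funext q
  simp [complexCol, rotZ, mul_apply, Fin.sum_univ_three, exp_mul_I]
  linear_combination (-(A q 1 : ℂ) * Complex.sin φ) * I_sq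

lemma toC_mul (R S : M3R) : toC (R * S) = toC R * toC S :=
  Matrix.map_mul (f := Complex.ofRealHom)

lemma isSO3.inv_toC {R : M3R} (h : isSO3 R) : (toC R)⁻¹ = toC Rᵀ := by
  refine inv_eq_right_inv ?_
  rw [← toC_mul, h.1, toC, Matrix.map_one _ ofReal_zero ofReal_one]

lemma toC_mul_A0_mul_toC_transpose (R S : M3R) :
    toC R * A0 * toC Sᵀ = vecMulVec (fun i => (R i 2 : ℂ)) (complexCol S) := by
  ext i j
  simp [toC, A0, complexCol, mul_apply, Fin.sum_univ_three, vecMulVec_apply]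
  ring

lemma exists_isSO3_col_two {x : Fin 3 → ℝ} (hx : x ⬝ᵥ x = 1) :
    ∃ R : M3R, isSO3 R ∧ ∀ i, R i 2 = x i := by
  have hunit : Orthonormal ℝ (({2} : Set (Fin 3)).domRestrict fun _ => WithLp.toLp 2 x) := by
    rw [orthonormal_iff_ite]
    rintro ⟨i, rfl⟩ ⟨j, rfl⟩
    exact hx
  obtain ⟨b, hb⟩ := hunit.exists_orthonormalBasis_extension_of_card_eq (by simp)
  set R₀ := (EuclideanSpace.basisFun (Fin 3) ℝ).toBasis.toMatrix b
  have hR₀ : R₀ ∈ orthogonalGroup (Fin 3) ℝ :=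
    OrthonormalBasis.toMatrix_orthonormalBasis_mem_orthogonal _ _
  -- scaling the first column by `det R₀ = ±1` fixes the orientation
  set d := R₀.det
  have hd : d * d = 1 := by
    have hdet := OrthonormalBasis.det_to_matrix_orthonormalBasis_real
      (EuclideanSpace.basisFun (Fin 3) ℝ) b
    rw [Module.Basis.det_apply] at hdet
    rcases hdet with h | h <;> simp [d, R₀, h]
  have hD : diagonal ![d, 1, 1] ∈ orthogonalGroup (Fin 3) ℝ := by
    rw [mem_orthogonalGroup_iff, diagonal_transpose, diagonal_mul_diagonal, ← diagonal_one]
    congr 1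
    ext i; fin_cases i <;> simp [hd]
  refine ⟨R₀ * diagonal ![d, 1, 1], ⟨(mem_orthogonalGroup_iff _ _).1 (mul_mem hR₀ hD), ?_⟩,
    fun i => ?_⟩
  · simpa [det_mul, Fin.prod_univ_three] using hd
  · simp [mul_diagonal, R₀, Module.Basis.toMatrix_apply, hb 2 rfl]

def orbitMap (p : SOS) : M3C := vecMulVec (fun i => (p.val.2 i : ℂ)) (complexCol p.val.1)

lemma orbitMap_mem (p : SOS) : orbitMap p ∈ OrbA0 := by
  obtain ⟨⟨A, x⟩, hA, hx⟩ := p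
  obtain ⟨R, hR, hRx⟩ := exists_isSO3_col_two hx
  refine ⟨0, R, A, hR, hA, ?_⟩
  rw [ofReal_zero, zero_mul, exp_zero, one_smul, hA.inv_toC, toC_mul_A0_mul_toC_transpose]
  simp only [orbitMap, hRx]

lemma orbitMap_eq_of_z2Rel {p p' : SOS} (h : z2Rel p p') : orbitMap p = orbitMap p' := by
  rcases h with h | h <;> simp only [orbitMap, h]
  ext i j
  simp [complexCol_mul_Jtm, vecMulVec_apply]

lemma z2Rel_of_orbitMap_eq {p p' : SOS} (h : orbitMap p = orbitMap p') : z2Rel p p' := by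
  obtain ⟨⟨A, x⟩, hA, hx⟩ := p
  obtain ⟨⟨A', x'⟩, hA', hx'⟩ := p'
  have hcast : ∀ y : Fin 3 → ℝ, y ⬝ᵥ y = 1 → (fun i => (y i : ℂ)) ⬝ᵥ (fun i => (y i : ℂ)) = 1 :=
    fun y hy => by simpa [dotProduct] using congrArg ((↑) : ℝ → ℂ) hy
  obtain ⟨c, hc, hxc, hvc⟩ :=
    exists_eq_smul_of_vecMulVec_eq (hcast x hx) (hcast x' hx') hA.complexCol_ne_zero h
  rcases mul_self_eq_one_iff.1 hc with rfl | rfl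
  · rw [one_smul] at hxc hvc
    left
    have hxx : x' = x := funext fun i => by exact_mod_cast congrFun hxc i
    have hAA : A' = A := hA'.eq_of_complexCol_eq hA hvc
    show (A', x') = (A, x)
    rw [hAA, hxx]
  · rw [neg_one_smul, ← complexCol_mul_Jtm] at hvc
    right
    have hxx : x' = -x := funext fun i => ofReal_injective (by simpa using congrFun hxc i)
    have hAA : A' = A * Jtm := hA'.eq_of_complexCol_eq (hA.mul isSO3_Jtm) hvc
    show (A', x') = (A * Jtm, -x)
    rw [hAA, hxx]

lemma exists_orbitMap_eq {m : M3C} (hm : m ∈ OrbA0) : ∃ p : SOS, orbitMap p = m := by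
  obtain ⟨φ, R₁, R₂, h₁, h₂, rfl⟩ := hm
  refine ⟨⟨(R₂ * rotZ φ, fun i => R₁ i 2), h₂.mul (isSO3_rotZ φ), h₁.col_dotProduct_col 2⟩, ?_⟩
  rw [h₂.inv_toC, toC_mul_A0_mul_toC_transpose, ← vecMulVec_smul, ← complexCol_mul_rotZ]
  rfl

def orbitQuotMap : Quot z2Rel → OrbA0 :=
  Quot.lift (fun p => ⟨orbitMap p, orbitMap_mem p⟩) fun _ _ h =>
    Subtype.ext (orbitMap_eq_of_z2Rel h)

lemma orbitQuotMap_bijective : Function.Bijective orbitQuotMap := by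
  refine ⟨?_, fun ⟨m, hm⟩ => ?_⟩
  · rintro ⟨p⟩ ⟨p'⟩ h
    exact Quot.sound (z2Rel_of_orbitMap_eq (congrArg Subtype.val h))
  · obtain ⟨p, hp⟩ := exists_orbitMap_eq hm
    exact ⟨Quot.mk _ p, Subtype.ext hp⟩

/-- The map sending the `ℤ₂`-orbit of `(A, x)` to the matrix `x ⊗ (A₁ + i A₂)ᵀ`
(where `A₁, A₂` are the first two columns of `A`) is a well-defined bijection
`(SO(3) × S²)/ℤ₂ → Orb(A₀)`. -/
theorem z2_quotient_bij_orbit_first_regime :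
    ∃ F : Quot z2Rel ≃ ↥OrbA0,
      ∀ (p : SOS) (m : ↥OrbA0),
        (m : M3C) = Matrix.vecMulVec (fun i => (p.val.2 i : ℂ))
          (fun q => (p.val.1 q 0 : ℂ) + Complex.I * (p.val.1 q 1 : ℂ)) →
        F (Quot.mk z2Rel p) = m :=
  ⟨Equiv.ofBijective orbitQuotMap orbitQuotMap_bijective, fun _ _ hm => (Subtype.ext hm).symm⟩
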